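/- Let w be a word over {a,b} and x a letter such that wx is a closed trapezoidal word while w is open. Then H_w ≤ L_w. -/

import Mathlib

/-- The two-letter alphabet {a, b}. -/
inductive AB : Type
  | a : AB
  | b : AB
deriving DecidableEq, Repr

/-- A (finite) word over {a, b}. -/
abbrev Word := List AB

open AB

/-- `u` occurs in `w` at position `i`. -/
def OccursAt (u w : Word) (i : ℕ) : Prop :=
  i + u.length ≤ w.length ∧ (w.drop i).take u.length = u

/-- `u` occurs exactly once in `w` (is unrepeated in `w`). -/
def OccursOnce (u w : Word) : Prop := ∃! i, OccursAt u w i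

/-- `u` is a right special factor of `w`: both `ua` and `ub` are factors of `w`. -/
def IsRightSpecial (u w : Word) : Prop := (u ++ [a]) <:+: w ∧ (u ++ [b]) <:+: w

/-- `u` is a left special factor of `w`: both `au` and `bu` are factors of `w`. -/
def IsLeftSpecial (u w : Word) : Prop := ([a] ++ u) <:+: w ∧ ([b] ++ u) <:+: w

/-- `K w`: the length of the shortest unrepeated suffix of `w`. -/
noncomputable def Kp (w : Word) : ℕ := sInf {n | ∃ s : Word, s <:+ w ∧ s.length = n ∧ OccursOnce s w}

/-- `H w`: the length of the shortest unrepeated prefix of `w`. -/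
noncomputable def Hp (w : Word) : ℕ := sInf {n | ∃ p : Word, p <+: w ∧ p.length = n ∧ OccursOnce p w}

/-- `R w`: the smallest `n ≥ 0` such that `w` has no right special factor of length `n`. -/
noncomputable def Rp (w : Word) : ℕ := sInf {n | ∀ u : Word, u.length = n → ¬ IsRightSpecial u w}

/-- `L w`: the smallest `n ≥ 0` such that `w` has no left special factor of length `n`. -/
noncomputable def Lp (w : Word) : ℕ := sInf {n | ∀ u : Word, u.length = n → ¬ IsLeftSpecial u w}

/-- A word `w` is trapezoidal if `|w| = K w + R w`. -/
def IsTrapezoidal (w : Word) : Prop := w.length = Kp w + Rp w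

/-- A finite word over `{a,b}` is Sturmian iff it is balanced: there is no word `u`
with both `aua` and `bub` factors of `w`. -/
def IsSturmian (w : Word) : Prop :=
  ¬ ∃ u : Word, ([a] ++ u ++ [a]) <:+: w ∧ ([b] ++ u ++ [b]) <:+: w

/-- A nonempty word is closed if it has a border (a proper prefix which is also a suffix)
whose only occurrences in `w` are as a prefix and as a suffix. -/
def IsClosedWord (w : Word) : Prop :=
  w ≠ [] ∧ ∃ v : Word, v <+: w ∧ v.length < w.length ∧ v <:+ w ∧
    ∀ i : ℕ, OccursAt v w i → i = 0 ∨ i + v.length = w.length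

/-- A nonempty word is open if it is not closed. -/
def IsOpenWord (w : Word) : Prop := w ≠ [] ∧ ¬ IsClosedWord w

/-- Central words: `a^n`, `b^n`, or `u a b v = v b a u`. -/
def IsCentral (w : Word) : Prop :=
  (∃ n : ℕ, w = List.replicate n a) ∨ (∃ n : ℕ, w = List.replicate n b) ∨
  (∃ u v : Word, w = u ++ [a, b] ++ v ∧ w = v ++ [b, a] ++ u)

/-- The minimal period of `w`: `|w|` minus the length of the longest border of `w`. -/
noncomputable def minPeriod (w : Word) : ℕ :=
  w.length - sSup {n | ∃ v : Word, v.length = n ∧ v <+: w ∧ v ≠ w ∧ v <:+ w}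

/-!
Let `v` be a border of `wx` occurring in `wx` only as a prefix and as a suffix. If `|wx| ≤ 2|v|`,
the Fine–Wilf theorem shows that `v` minus its last letter plays the same role for `w`, so `w`
would be closed. Otherwise the shortest unrepeated suffix of `wx` has length `|v| + 1`, and
trapezoidality yields a right special factor of `wx` of length `|v| - 1`. Factors of `wx` shorter
than `v` extend to the right, and those of length `|v|` already occur in `w`; so counting factors
gives `w` a left special factor of length `|v| - 1`. Hence `L_w ≥ |v| ≥ H_w`, the last inequality
because `v` is an unrepeated prefix of `w`.
-/

open scoped Finset

theorem List.hasPeriod_length_sub_of_prefix_of_suffix {α : Type*} {v W : List α}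
    (hp : v <+: W) (hs : v <:+ W) : W.HasPeriod (W.length - v.length) := by
  have hdrop : W.drop (W.length - v.length) = v := (List.suffix_iff_eq_drop.1 hs).symm
  unfold List.HasPeriod
  conv_lhs => rw [← List.take_append_drop (W.length - v.length) W, hdrop]
  exact (List.prefix_append_right_inj _).2 hp

theorem List.HasPeriod.of_hasPeriod_take {α : Type*} {W : List α} {p d m : ℕ}
    (hW : W.HasPeriod p) (hp : 0 < p) (hpm : p ≤ m) (hd : d ∣ p)
    (h : (W.take m).HasPeriod d) : W.HasPeriod d := by
  rw [List.hasPeriod_iff_forall_getElem?_mod] at hW h ⊢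
  intro j hj
  have hjp : j % p < p := Nat.mod_lt j hp
  have hjj : j % p ≤ j := Nat.mod_le j p
  have hjd : j % d ≤ j % p := Nat.mod_mod_of_dvd j hd ▸ Nat.mod_le _ _
  calc W[j]? = W[j % p]? := hW j hj
    _ = (W.take m)[j % p]? := (List.getElem?_take_of_lt (by omega)).symm
    _ = (W.take m)[j % d]? := by
      rw [h _ (by rw [List.length_take]; omega), Nat.mod_mod_of_dvd j hd]
    _ = W[j % d]? := List.getElem?_take_of_lt (by omega)

theorem List.exists_append_singleton_infix_of_infix_dropLast {α : Type*} {u l : List α}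
    (hl : l ≠ []) (h : u <:+: l.dropLast) : ∃ c, u ++ [c] <:+: l := by
  obtain ⟨s, t, hst⟩ := h
  rw [← List.dropLast_concat_getLast hl, ← hst]
  cases t with
  | nil => exact ⟨l.getLast hl, s, [], by simp⟩
  | cons c t => exact ⟨c, s, t ++ [l.getLast hl], by simp⟩

section Occurrences

variable {s u w W : Word} {i j : ℕ}

theorem occursAt_iff_prefix_drop :
    OccursAt u w i ↔ i + u.length ≤ w.length ∧ u <+: w.drop i :=
  and_congr_right fun _ => by rw [List.prefix_iff_eq_take, eq_comm]

theorem occursAt_zero_of_prefix (h : u <+: w) : OccursAt u w 0 :=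
  occursAt_iff_prefix_drop.2 ⟨by simpa using h.length_le, h⟩

theorem occursAt_of_suffix (h : u <:+ w) : OccursAt u w (w.length - u.length) :=
  occursAt_iff_prefix_drop.2
    ⟨by have := h.length_le; omega, (List.suffix_iff_eq_drop.1 h ▸ List.prefix_refl u)⟩

theorem OccursAt.trans (hs : OccursAt s u i) (hu : OccursAt u w j) : OccursAt s w (j + i) := by
  rw [occursAt_iff_prefix_drop] at hs hu ⊢
  refine ⟨by omega, ?_⟩
  rw [← List.drop_drop]
  exact hs.2.trans (hu.2.drop i)

theorem OccursAt.of_prefix (h : OccursAt u w i) (hw : w <+: W) : OccursAt u W i := by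
  rw [occursAt_iff_prefix_drop] at h ⊢
  exact ⟨h.1.trans hw.length_le, h.2.trans (hw.drop i)⟩

theorem OccursAt.hasPeriod_take (hu : u <+: W) (h : OccursAt u W i) :
    (W.take (i + u.length)).HasPeriod i := by
  rw [occursAt_iff_prefix_drop] at h
  have hsplit : W.take (i + u.length) = W.take i ++ u := by
    rw [List.take_add, ← List.prefix_iff_eq_take.1 h.2]
  have hu' : u <+: W.take (i + u.length) := List.prefix_take_iff.2 ⟨hu, by omega⟩
  unfold List.HasPeriod
  rw [List.take_take, min_eq_left (by omega)]
  conv_lhs => rw [hsplit]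
  exact (List.prefix_append_right_inj _).2 hu'

theorem List.HasPeriod.occursAt_of_prefix (h : W.HasPeriod i) (hu : u <+: W)
    (hlen : i + u.length ≤ W.length) : OccursAt u W i :=
  occursAt_iff_prefix_drop.2
    ⟨hlen, List.prefix_of_prefix_length_le hu h.drop_prefix (by rw [List.length_drop]; omega)⟩

end Occurrences

structure IsClosingBorder (v W : Word) : Prop where
  isPrefix : v <+: W
  length_lt : v.length < W.length
  isSuffix : v <:+ W
  eq_zero_or_of_occursAt : ∀ i, OccursAt v W i → i = 0 ∨ i + v.length = W.length

theorem isClosedWord_iff {W : Word} : IsClosedWord W ↔ W ≠ [] ∧ ∃ v, IsClosingBorder v W :=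
  and_congr_right fun _ =>
    ⟨fun ⟨v, hp, hlt, hs, hocc⟩ => ⟨v, hp, hlt, hs, hocc⟩,
      fun ⟨v, hp, hlt, hs, hocc⟩ => ⟨v, hp, hlt, hs, hocc⟩⟩

namespace IsClosingBorder

variable {u v W : Word} (hv : IsClosingBorder v W)
include hv

theorem length_pos (hW : 1 < W.length) : 0 < v.length := by
  by_contra! h
  obtain rfl : v = [] := List.length_eq_zero_iff.1 (by omega)
  rcases hv.eq_zero_or_of_occursAt 1 ⟨by rw [List.length_nil]; omega, by simp⟩ with hocc | hocc
  · omega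
  · rw [List.length_nil] at hocc
    omega

theorem hasPeriod : W.HasPeriod (W.length - v.length) :=
  List.hasPeriod_length_sub_of_prefix_of_suffix hv.isPrefix hv.isSuffix

theorem prefix_dropLast : v <+: W.dropLast :=
  List.prefix_of_prefix_length_le hv.isPrefix (List.dropLast_prefix W)
    (by rw [List.length_dropLast]; have := hv.length_lt; omega)

/-- Suffixes no longer than `v` recur inside the prefix `v`, while any occurrence of the suffix
one letter longer carries an occurrence of `v`, which pins it to the end. -/
theorem Kp_eq : Kp W = v.length + 1 := by
  refine IsLeast.csInf_eq ⟨?_, ?_⟩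
  · obtain ⟨k, hk⟩ : ∃ k, k + v.length + 1 = W.length := ⟨_, Nat.sub_add_cancel hv.length_lt⟩
    have hs : W.drop k <:+ W := List.drop_suffix k W
    have hslen : (W.drop k).length = v.length + 1 := by simp only [List.length_drop]; omega
    have hsW : OccursAt (W.drop k) W k := by
      convert occursAt_of_suffix hs using 1
      omega
    have hvs : OccursAt v (W.drop k) 1 := by
      convert occursAt_of_suffix (List.suffix_of_suffix_length_le hv.isSuffix hs (by omega)) using 1
      omega
    refine ⟨W.drop k, hs, hslen, k, hsW, fun i hi => ?_⟩
    have := hv.eq_zero_or_of_occursAt _ (hvs.trans hi)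
    omega
  · rintro n ⟨s, hs, rfl, hsOnce⟩
    by_contra! hlen
    have hsv : OccursAt s v (v.length - s.length) :=
      occursAt_of_suffix (List.suffix_of_suffix_length_le hs hv.isSuffix (by omega))
    have := hsOnce.unique (hsv.trans (occursAt_zero_of_prefix hv.isPrefix))
      (hsv.trans (occursAt_of_suffix hv.isSuffix))
    have := hv.length_lt
    omega

theorem dropLast (hlen : W.length ≤ 2 * v.length) :
    IsClosingBorder v.dropLast W.dropLast := by
  have hlt := hv.length_lt
  have hv0 : v ≠ [] := List.ne_nil_of_length_pos (by omega)
  refine ⟨List.prefix_of_prefix_length_le ((List.dropLast_prefix v).trans hv.isPrefix)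
      (List.dropLast_prefix W) (by simp only [List.length_dropLast]; omega),
      by simp only [List.length_dropLast]; omega, ?_, fun i hi => ?_⟩
  · obtain ⟨t, rfl⟩ := hv.isSuffix
    rw [List.dropLast_append_of_ne_nil hv0]
    exact List.suffix_append t _
  by_contra! hint
  obtain ⟨p, hp, hper⟩ : ∃ p, p + v.length = W.length ∧ W.HasPeriod p :=
    ⟨_, Nat.sub_add_cancel hlt.le, hv.hasPeriod⟩
  have hi' : OccursAt v.dropLast W i := hi.of_prefix (List.dropLast_prefix W)
  have hlen' : i + v.dropLast.length = i + (v.length - 1) := by simp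
  have hip : i < p := by
    have := hi.1
    simp only [List.length_dropLast] at hint this
    omega
  have hgcd_pos : 0 < i.gcd p := Nat.gcd_pos_of_pos_left p (by omega)
  have hgcd_le : i.gcd p ≤ i := Nat.gcd_le_left p (by omega)
  have htake : (W.take (i + (v.length - 1))).length = i + (v.length - 1) := by
    simp only [List.length_take]; omega
  -- Fine–Wilf: the overlap of the two occurrences of `v.dropLast` has periods `i` and `p`.
  have hgcd := (hlen' ▸ hi'.hasPeriod_take ((List.dropLast_prefix v).trans hv.isPrefix)).gcd
    (hper.infix (List.take_prefix _ W).isInfix) (by omega)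
  have hW := hper.of_hasPeriod_take (by omega) (by omega) (Nat.gcd_dvd_right i p) hgcd
  have := hv.eq_zero_or_of_occursAt _ (hW.occursAt_of_prefix hv.isPrefix (by omega))
  omega

theorem infix_dropLast (hu : u <:+: W) (hlen : u.length ≤ v.length) : u <:+: W.dropLast := by
  have hW : W ≠ [] := List.ne_nil_of_length_pos (by have := hv.length_lt; omega)
  rw [← List.dropLast_concat_getLast hW, List.infix_concat_iff,
    List.dropLast_concat_getLast hW] at hu
  rcases hu with hu | hu
  · exact (List.suffix_of_suffix_length_le hu hv.isSuffix hlen).isInfix.trans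
      hv.prefix_dropLast.isInfix
  · exact hu

theorem exists_append_singleton_infix (hu : u <:+: W) (hlen : u.length < v.length) :
    ∃ c, u ++ [c] <:+: W :=
  List.exists_append_singleton_infix_of_infix_dropLast
    (List.ne_nil_of_length_pos (by have := hv.length_lt; omega))
    (hv.infix_dropLast hu hlen.le)

theorem Hp_dropLast_le : Hp W.dropLast ≤ v.length := by
  refine Nat.sInf_le ⟨v, hv.prefix_dropLast, rfl, 0,
    occursAt_zero_of_prefix hv.prefix_dropLast, fun i hi => ?_⟩
  have := hv.eq_zero_or_of_occursAt i (OccursAt.of_prefix hi (List.dropLast_prefix W))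
  have := hi.1
  simp only [List.length_dropLast] at this
  omega

end IsClosingBorder

section Factors

variable {u w : Word} {n : ℕ}

def factorsOfLength (w : Word) (n : ℕ) : Finset Word :=
  {u ∈ (w.sublistsLen n).toFinset | u <:+: w}

theorem mem_factorsOfLength : u ∈ factorsOfLength w n ↔ u.length = n ∧ u <:+: w := by
  simp only [factorsOfLength, Finset.mem_filter, List.mem_toFinset, List.mem_sublistsLen]
  exact ⟨fun ⟨⟨_, h⟩, hu⟩ => ⟨h, hu⟩, fun ⟨h, hu⟩ => ⟨⟨hu.sublist, h⟩, hu⟩⟩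

theorem factorsOfLength_mono {w' : Word} (h : w <:+: w') :
    factorsOfLength w n ⊆ factorsOfLength w' n := fun _ hu => by
  rw [mem_factorsOfLength] at hu ⊢
  exact ⟨hu.1, hu.2.trans h⟩

theorem card_factorsOfLength_succ_le (h : ∀ u : Word, u.length = n → ¬IsLeftSpecial u w) :
    #(factorsOfLength w (n + 1)) ≤ #(factorsOfLength w n) := by
  refine Finset.card_le_card_of_injOn List.tail (fun u hu => ?_) (fun u hu u' hu' huu' => ?_)
  · rw [Finset.mem_coe, mem_factorsOfLength] at hu ⊢
    exact ⟨by simp [hu.1], (List.tail_suffix u).isInfix.trans hu.2⟩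
  rw [Finset.mem_coe, mem_factorsOfLength] at hu hu'
  obtain ⟨c, u, rfl⟩ := List.exists_cons_of_length_pos (by omega : 0 < u.length)
  obtain ⟨c', u', rfl⟩ := List.exists_cons_of_length_pos (by omega : 0 < u'.length)
  obtain rfl : u = u' := huu'
  have hlen : u.length = n := by simpa using hu.1
  cases c <;> cases c'
  · rfl
  · exact (h u hlen ⟨hu.2, hu'.2⟩).elim
  · exact (h u hlen ⟨hu'.2, hu.2⟩).elim
  · rfl

theorem card_factorsOfLength_lt_succ
    (hext : ∀ u : Word, u.length = n → u <:+: w → ∃ c, u ++ [c] <:+: w)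
    (hu : u.length = n) (hrs : IsRightSpecial u w) :
    #(factorsOfLength w n) < #(factorsOfLength w (n + 1)) := by
  have hmem : ∀ c, u ++ [c] <:+: w → u ++ [c] ∈ factorsOfLength w (n + 1) := fun c hc =>
    mem_factorsOfLength.2 ⟨by simp [hu], hc⟩
  have hsub : factorsOfLength w n ⊆ (factorsOfLength w (n + 1)).image List.dropLast := by
    intro u' hu'
    obtain ⟨hlen, hinf⟩ := mem_factorsOfLength.1 hu'
    obtain ⟨c, hc⟩ := hext u' hlen hinf
    exact Finset.mem_image.2 ⟨u' ++ [c], mem_factorsOfLength.2 ⟨by simp [hlen], hc⟩,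
      List.dropLast_concat⟩
  have hninj : ¬Set.InjOn List.dropLast (factorsOfLength w (n + 1) : Set Word) := fun hinj => by
    have := hinj (hmem a hrs.1) (hmem b hrs.2) (by simp)
    simp at this
  calc #(factorsOfLength w n)
      ≤ #((factorsOfLength w (n + 1)).image List.dropLast) := Finset.card_le_card hsub
    _ < #(factorsOfLength w (n + 1)) :=
      lt_of_le_of_ne Finset.card_image_le (mt Finset.card_image_iff.1 hninj)

end Factors

theorem exists_isRightSpecial_of_lt_Rp {w : Word} {n : ℕ} (h : n < Rp w) :
    ∃ u : Word, u.length = n ∧ IsRightSpecial u w := by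
  by_contra! h'
  exact Nat.notMem_of_lt_sInf h fun u hu => h' u hu

theorem IsLeftSpecial.take {u w : Word} (h : IsLeftSpecial u w) (n : ℕ) :
    IsLeftSpecial (u.take n) w :=
  ⟨(((List.prefix_append_right_inj _).2 (List.take_prefix n u)).isInfix).trans h.1,
    (((List.prefix_append_right_inj _).2 (List.take_prefix n u)).isInfix).trans h.2⟩

theorem IsLeftSpecial.length_lt_Lp {u w : Word} (h : IsLeftSpecial u w) : u.length < Lp w := by
  by_contra! hle
  have hne : {n | ∀ u : Word, u.length = n → ¬IsLeftSpecial u w}.Nonempty :=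
    ⟨w.length, fun u hu hls => by
      have := hls.1.length_le
      rw [List.length_append, List.length_singleton] at this
      omega⟩
  have hLp : Lp w ∈ {n | ∀ u : Word, u.length = n → ¬IsLeftSpecial u w} := Nat.sInf_mem hne
  exact hLp (u.take (Lp w)) (by rw [List.length_take]; omega) (h.take _)

theorem IsClosingBorder.exists_isLeftSpecial_dropLast {u v W : Word} (hv : IsClosingBorder v W)
    (hrs : IsRightSpecial u W) (hlen : u.length + 1 = v.length) :
    ∃ u' : Word, u'.length = u.length ∧ IsLeftSpecial u' W.dropLast := by
  by_contra! h
  have h₁ := card_factorsOfLength_succ_le h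
  have h₂ : #(factorsOfLength W.dropLast u.length) ≤ #(factorsOfLength W u.length) :=
    Finset.card_le_card (factorsOfLength_mono (List.dropLast_prefix W).isInfix)
  have h₃ := card_factorsOfLength_lt_succ
    (fun u' hu' hinf => hv.exists_append_singleton_infix hinf (by omega)) rfl hrs
  have h₄ : #(factorsOfLength W (u.length + 1)) ≤ #(factorsOfLength W.dropLast (u.length + 1)) :=
    Finset.card_le_card fun u' hu' => by
      rw [mem_factorsOfLength] at hu' ⊢
      exact ⟨hu'.1, hv.infix_dropLast hu'.2 (by omega)⟩
  omega

/-- if `wx` is a closed trapezoidal word while `w` is open, then `H w ≤ L w`. -/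
theorem H_le_L_at_end_of_open_run (w : Word) (x : AB)
    (htrap : IsTrapezoidal (w ++ [x])) (hclosed : IsClosedWord (w ++ [x]))
    (hopen : IsOpenWord w) :
    Hp w ≤ Lp w := by
  obtain ⟨-, v, hv⟩ := isClosedWord_iff.1 hclosed
  have hlong : 2 * v.length < (w ++ [x]).length := by
    by_contra! hshort
    have hw := hv.dropLast hshort
    rw [List.dropLast_concat] at hw
    exact hopen.2 (isClosedWord_iff.2 ⟨hopen.1, _, hw⟩)
  have hv0 : 0 < v.length := hv.length_pos (by simp [List.length_pos_iff.2 hopen.1])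
  have hR : v.length - 1 < Rp (w ++ [x]) := by
    have := hv.Kp_eq
    unfold IsTrapezoidal at htrap
    omega
  obtain ⟨u, hu, hrs⟩ := exists_isRightSpecial_of_lt_Rp hR
  obtain ⟨u', hu', hls⟩ := hv.exists_isLeftSpecial_dropLast hrs (by omega)
  rw [List.dropLast_concat] at hls
  calc Hp w ≤ v.length := by simpa using hv.Hp_dropLast_le
    _ ≤ Lp w := by have := hls.length_lt_Lp; omega
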